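/- (Potential vorticity production for the compressible slice model of Cullen 2008.) Let u_S = (u,w), u_T, θ, Π, D be smooth fields with D > 0, and f, g, s, c_p ∈ ℝ and Π₀′ ∈ ℝ constants, satisfying (M1) ∂_t u_S + (u_S·∇)u_S − f u_T x̂ = −c_p θ ∇Π − g ẑ; (M2) ∂_t u_T + u_S·∇u_T + f u = −c_p θ Π₀′; (M3) ∂_t θ + u_S·∇θ = −s u_T; (M4) ∂_t D + ∇·(D u_S) = 0. Then the potential vorticity q := D⁻¹ [ s(∂_z u − ∂_x w) + ∂_z θ (∂_x u_T + f) − ∂_x θ ∂_z u_T ] satisfies ∂_t q + u_S·∇ q = s c_p D⁻¹ ( ∂_x θ ∂_z Π − ∂_z θ ∂_x Π ). In particular potential vorticity is created wherever the gradients of θ and Π are not aligned. -/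

import Mathlib

noncomputable section

/-- Partial derivative in the first (x) coordinate of a planar scalar field. -/
def px (f : ℝ × ℝ → ℝ) (p : ℝ × ℝ) : ℝ := deriv (fun x => f (x, p.2)) p.1

/-- Partial derivative in the second (z) coordinate of a planar scalar field. -/
def pz (f : ℝ × ℝ → ℝ) (p : ℝ × ℝ) : ℝ := deriv (fun z => f (p.1, z)) p.2

/-- Time derivative of a time-dependent scalar field. -/
def pt (f : ℝ → ℝ × ℝ → ℝ) (t : ℝ) (p : ℝ × ℝ) : ℝ := deriv (fun s => f s p) t

/-- Smoothness (C^∞, jointly in time and space) of a time-dependent scalar field. -/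
def SmoothS (f : ℝ → ℝ × ℝ → ℝ) : Prop :=
  ContDiff ℝ (⊤ : ℕ∞) (fun q : ℝ × (ℝ × ℝ) => f q.1 q.2)

/-- Smoothness of a time-dependent planar vector field. -/
def SmoothV (u : ℝ → ℝ × ℝ → ℝ × ℝ) : Prop :=
  ContDiff ℝ (⊤ : ℕ∞) (fun q : ℝ × (ℝ × ℝ) => u q.1 q.2)

/-- First component of a time-dependent planar vector field. -/
def c1 (v : ℝ → ℝ × ℝ → ℝ × ℝ) : ℝ → ℝ × ℝ → ℝ := fun t p => (v t p).1

/-- Second component of a time-dependent planar vector field. -/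
def c2 (v : ℝ → ℝ × ℝ → ℝ × ℝ) : ℝ → ℝ × ℝ → ℝ := fun t p => (v t p).2

/-- Advective derivative u·∇f of a time-dependent scalar field f along u. -/
def adv (u : ℝ → ℝ × ℝ → ℝ × ℝ) (f : ℝ → ℝ × ℝ → ℝ) (t : ℝ) (p : ℝ × ℝ) : ℝ :=
  (u t p).1 * px (f t) p + (u t p).2 * pz (f t) p

/-- First component of (∇u)ᵀ v, i.e. Σⱼ vʲ ∂ₓ uʲ. -/
def gradT1 (u v : ℝ → ℝ × ℝ → ℝ × ℝ) (t : ℝ) (p : ℝ × ℝ) : ℝ :=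
  (v t p).1 * px (c1 u t) p + (v t p).2 * px (c2 u t) p

/-- Second component of (∇u)ᵀ v, i.e. Σⱼ vʲ ∂_z uʲ. -/
def gradT2 (u v : ℝ → ℝ × ℝ → ℝ × ℝ) (t : ℝ) (p : ℝ × ℝ) : ℝ :=
  (v t p).1 * pz (c1 u t) p + (v t p).2 * pz (c2 u t) p

/-- Planar dot product. -/
def dot (a b : ℝ × ℝ) : ℝ := a.1 * b.1 + a.2 * b.2


/-! ### Auxiliary machinery -/

/-- Uncurried version of a time-dependent scalar field. -/
def SF (f : ℝ → ℝ × ℝ → ℝ) : ℝ × ℝ × ℝ → ℝ := fun r => f r.1 r.2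

/-- Uncurried first component of a time-dependent vector field. -/
def UF (u : ℝ → ℝ × ℝ → ℝ × ℝ) : ℝ × ℝ × ℝ → ℝ := fun r => (u r.1 r.2).1

/-- Uncurried second component of a time-dependent vector field. -/
def WF (u : ℝ → ℝ × ℝ → ℝ × ℝ) : ℝ × ℝ × ℝ → ℝ := fun r => (u r.1 r.2).2

/-- Directional derivative of a function on time-space. -/
def dd (v : ℝ × ℝ × ℝ) (F : ℝ × ℝ × ℝ → ℝ) : ℝ × ℝ × ℝ → ℝ := fun q => fderiv ℝ F q v

def vt : ℝ × ℝ × ℝ := (1, 0, 0)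
def vx : ℝ × ℝ × ℝ := (0, 1, 0)
def vz : ℝ × ℝ × ℝ := (0, 0, 1)

lemma contDiff_dd {F : ℝ × ℝ × ℝ → ℝ} (hF : ContDiff ℝ (⊤ : ℕ∞) F) (v : ℝ × ℝ × ℝ) :
    ContDiff ℝ (⊤ : ℕ∞) (dd v F) :=
  (ContinuousLinearMap.apply ℝ ℝ v).contDiff.comp (hF.fderiv_right (by simp))

lemma dd_comm' {F : ℝ × ℝ × ℝ → ℝ} (hF : ContDiff ℝ (⊤ : ℕ∞) F) (v w q : ℝ × ℝ × ℝ) :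
    dd v (dd w F) q = dd w (dd v F) q := by
  have hdF : Differentiable ℝ (fderiv ℝ F) := (hF.fderiv_right (m := 1) (WithTop.coe_le_coe.mpr le_top)).differentiable one_ne_zero
  have key : ∀ a b : ℝ × ℝ × ℝ,
      fderiv ℝ (fun r => fderiv ℝ F r a) q b = fderiv ℝ (fderiv ℝ F) q b a := by
    intro a b
    have := fderiv_clm_apply (c := fderiv ℝ F) (u := fun _ => a) (hdF q) (differentiableAt_const a)
    simp [this]
  have hsymm : IsSymmSndFDerivAt ℝ F q :=
    (hF.contDiffAt).isSymmSndFDerivAt (by simp; exact WithTop.coe_le_coe.mpr le_top)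
  show fderiv ℝ (fun r => fderiv ℝ F r w) q v = fderiv ℝ (fun r => fderiv ℝ F r v) q w
  rw [key w v, key v w]
  exact hsymm.eq v w

section ddRules
variable {A B : ℝ × ℝ × ℝ → ℝ} {v q : ℝ × ℝ × ℝ} {c : ℝ}

lemma dd_add' (hA : DifferentiableAt ℝ A q) (hB : DifferentiableAt ℝ B q) :
    dd v (fun r => A r + B r) q = dd v A q + dd v B q := by
  simp [dd, fderiv_fun_add hA hB]

lemma dd_sub' (hA : DifferentiableAt ℝ A q) (hB : DifferentiableAt ℝ B q) :
    dd v (fun r => A r - B r) q = dd v A q - dd v B q := by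
  simp [dd, fderiv_fun_sub hA hB]

lemma dd_mul' (hA : DifferentiableAt ℝ A q) (hB : DifferentiableAt ℝ B q) :
    dd v (fun r => A r * B r) q = dd v A q * B q + A q * dd v B q := by
  simp [dd, fderiv_fun_mul hA hB]; ring

lemma dd_neg' : dd v (fun r => -A r) q = -dd v A q := by
  simp [dd, fderiv_neg]

lemma dd_const' : dd v (fun _ => c) q = 0 := by simp [dd]

lemma dd_inv' (hA : DifferentiableAt ℝ A q) (h0 : A q ≠ 0) :
    dd v (fun r => (A r)⁻¹) q = -((A q) ^ 2)⁻¹ * dd v A q := by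
  have h : HasFDerivAt (fun r => (A r)⁻¹) (-((A q) ^ 2)⁻¹ • fderiv ℝ A q) q :=
    (hasDerivAt_inv h0).comp_hasFDerivAt q hA.hasFDerivAt
  simp [dd, h.fderiv]

end ddRules

lemma pt_dd {G : ℝ × ℝ × ℝ → ℝ} (t : ℝ) (p : ℝ × ℝ) (hG : DifferentiableAt ℝ G (t, p)) :
    pt (fun s y => G (s, y)) t p = dd vt G (t, p) := by
  have h : HasDerivAt (fun s : ℝ => (s, p) : ℝ → ℝ × ℝ × ℝ) (1, (0 : ℝ × ℝ)) t :=
    (hasDerivAt_id t).prodMk (hasDerivAt_const t p)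
  exact (hG.hasFDerivAt.comp_hasDerivAt t h).deriv

lemma px_dd {G : ℝ × ℝ × ℝ → ℝ} (t : ℝ) (p : ℝ × ℝ) (hG : DifferentiableAt ℝ G (t, p)) :
    px (fun y => G (t, y)) p = dd vx G (t, p) := by
  have h : HasDerivAt (fun x : ℝ => (t, (x, p.2)) : ℝ → ℝ × ℝ × ℝ)
      ((0 : ℝ), ((1 : ℝ), (0 : ℝ))) p.1 :=
    (hasDerivAt_const p.1 t).prodMk ((hasDerivAt_id p.1).prodMk (hasDerivAt_const p.1 p.2))
  have h2 := (hG.hasFDerivAt.comp_hasDerivAt p.1 h).deriv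
  simpa [px, dd, vx, Function.comp_def] using h2

lemma pz_dd {G : ℝ × ℝ × ℝ → ℝ} (t : ℝ) (p : ℝ × ℝ) (hG : DifferentiableAt ℝ G (t, p)) :
    pz (fun y => G (t, y)) p = dd vz G (t, p) := by
  have h : HasDerivAt (fun z : ℝ => (t, (p.1, z)) : ℝ → ℝ × ℝ × ℝ)
      ((0 : ℝ), ((0 : ℝ), (1 : ℝ))) p.2 :=
    (hasDerivAt_const p.2 t).prodMk ((hasDerivAt_const p.2 p.1).prodMk (hasDerivAt_id p.2))
  have h2 := (hG.hasFDerivAt.comp_hasDerivAt p.2 h).deriv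
  simpa [pz, dd, vz, Function.comp_def] using h2

/-- Potential vorticity production for the compressible slice model
of Cullen 2008: under (M1)–(M4) with D > 0, the potential vorticity
q = D⁻¹ [ s(∂_z u − ∂_x w) + ∂_z θ (∂_x u_T + f) − ∂_x θ ∂_z u_T ]
satisfies ∂ₜ q + u_S·∇q = s c_p D⁻¹ (∂_x θ ∂_z Π − ∂_z θ ∂_x Π). -/
theorem cullen_potential_vorticity_production
    (uS : ℝ → ℝ × ℝ → ℝ × ℝ) (uT θ Pi : ℝ → ℝ × ℝ → ℝ)
    (f g s cp Pi₀' : ℝ)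
    (huS : SmoothV uS) (huT : SmoothS uT) (hθ : SmoothS θ) (hPi : SmoothS Pi)
    (hM1x : ∀ t p, pt (c1 uS) t p + adv uS (c1 uS) t p - f * uT t p
        = -(cp * θ t p * px (Pi t) p))
    (hM1z : ∀ t p, pt (c2 uS) t p + adv uS (c2 uS) t p
        = -(cp * θ t p * pz (Pi t) p) - g)
    (hM2 : ∀ t p, pt uT t p + adv uS uT t p + f * (uS t p).1 = -(cp * θ t p * Pi₀'))
    (hM3 : ∀ t p, pt θ t p + adv uS θ t p = -(s * uT t p))
    (D : ℝ → ℝ × ℝ → ℝ) (hD : SmoothS D) (hDpos : ∀ t p, 0 < D t p)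
    (hM4 : ∀ t p, pt D t p + px (fun q => D t q * (uS t q).1) p
        + pz (fun q => D t q * (uS t q).2) p = 0)
    (q : ℝ → ℝ × ℝ → ℝ)
    (hq : ∀ t p, q t p = (D t p)⁻¹ *
        (s * (pz (c1 uS t) p - px (c2 uS t) p)
          + pz (θ t) p * (px (uT t) p + f) - px (θ t) p * pz (uT t) p)) :
    ∀ t p, pt q t p + adv uS q t p
      = s * cp * (D t p)⁻¹ * (px (θ t) p * pz (Pi t) p - pz (θ t) p * px (Pi t) p) := by
  intro t p
  -- smoothness of the uncurried fields
  have hUS : ContDiff ℝ (⊤ : ℕ∞) (fun r : ℝ × ℝ × ℝ => uS r.1 r.2) := huS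
  have hU : ContDiff ℝ (⊤ : ℕ∞) (UF uS) := contDiff_fst.comp hUS
  have hW : ContDiff ℝ (⊤ : ℕ∞) (WF uS) := contDiff_snd.comp hUS
  have hT : ContDiff ℝ (⊤ : ℕ∞) (SF uT) := huT
  have hTH : ContDiff ℝ (⊤ : ℕ∞) (SF θ) := hθ
  have hP : ContDiff ℝ (⊤ : ℕ∞) (SF Pi) := hPi
  have hDF : ContDiff ℝ (⊤ : ℕ∞) (SF D) := hD
  have hDne : ∀ r, SF D r ≠ 0 := by rintro ⟨a, b⟩; exact ne_of_gt (hDpos a b)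
  -- differentiability facts for `fun_prop`
  have hU' : Differentiable ℝ (UF uS) := hU.differentiable (by simp)
  have hW' : Differentiable ℝ (WF uS) := hW.differentiable (by simp)
  have hT' : Differentiable ℝ (SF uT) := hT.differentiable (by simp)
  have hTH' : Differentiable ℝ (SF θ) := hTH.differentiable (by simp)
  have hP' : Differentiable ℝ (SF Pi) := hP.differentiable (by simp)
  have hDF' : Differentiable ℝ (SF D) := hDF.differentiable (by simp)
  have hUt' : Differentiable ℝ (dd vt (UF uS)) := (contDiff_dd hU vt).differentiable (by simp)
  have hUx' : Differentiable ℝ (dd vx (UF uS)) := (contDiff_dd hU vx).differentiable (by simp)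
  have hUz' : Differentiable ℝ (dd vz (UF uS)) := (contDiff_dd hU vz).differentiable (by simp)
  have hWt' : Differentiable ℝ (dd vt (WF uS)) := (contDiff_dd hW vt).differentiable (by simp)
  have hWx' : Differentiable ℝ (dd vx (WF uS)) := (contDiff_dd hW vx).differentiable (by simp)
  have hWz' : Differentiable ℝ (dd vz (WF uS)) := (contDiff_dd hW vz).differentiable (by simp)
  have hTt' : Differentiable ℝ (dd vt (SF uT)) := (contDiff_dd hT vt).differentiable (by simp)
  have hTx' : Differentiable ℝ (dd vx (SF uT)) := (contDiff_dd hT vx).differentiable (by simp)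
  have hTz' : Differentiable ℝ (dd vz (SF uT)) := (contDiff_dd hT vz).differentiable (by simp)
  have hTHt' : Differentiable ℝ (dd vt (SF θ)) := (contDiff_dd hTH vt).differentiable (by simp)
  have hTHx' : Differentiable ℝ (dd vx (SF θ)) := (contDiff_dd hTH vx).differentiable (by simp)
  have hTHz' : Differentiable ℝ (dd vz (SF θ)) := (contDiff_dd hTH vz).differentiable (by simp)
  have hPt' : Differentiable ℝ (dd vt (SF Pi)) := (contDiff_dd hP vt).differentiable (by simp)
  have hPx' : Differentiable ℝ (dd vx (SF Pi)) := (contDiff_dd hP vx).differentiable (by simp)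
  have hPz' : Differentiable ℝ (dd vz (SF Pi)) := (contDiff_dd hP vz).differentiable (by simp)
  have hDt' : Differentiable ℝ (dd vt (SF D)) := (contDiff_dd hDF vt).differentiable (by simp)
  have hDx' : Differentiable ℝ (dd vx (SF D)) := (contDiff_dd hDF vx).differentiable (by simp)
  have hDz' : Differentiable ℝ (dd vz (SF D)) := (contDiff_dd hDF vz).differentiable (by simp)
  -- the model equations on time-space
  have H1xE : ∀ r : ℝ × ℝ × ℝ, dd vt (UF uS) r
      + (UF uS r * dd vx (UF uS) r + WF uS r * dd vz (UF uS) r) - f * SF uT r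
      = -(cp * SF θ r * dd vx (SF Pi) r) := by
    rintro ⟨a, b⟩
    have h := hM1x a b
    simp only [adv] at h
    rw [show pt (c1 uS) a b = dd vt (UF uS) (a, b) from pt_dd a b (hU' _),
        show px (c1 uS a) b = dd vx (UF uS) (a, b) from px_dd a b (hU' _),
        show pz (c1 uS a) b = dd vz (UF uS) (a, b) from pz_dd a b (hU' _),
        show px (Pi a) b = dd vx (SF Pi) (a, b) from px_dd a b (hP' _)] at h
    exact h
  have H1zE : ∀ r : ℝ × ℝ × ℝ, dd vt (WF uS) r
      + (UF uS r * dd vx (WF uS) r + WF uS r * dd vz (WF uS) r)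
      = -(cp * SF θ r * dd vz (SF Pi) r) - g := by
    rintro ⟨a, b⟩
    have h := hM1z a b
    simp only [adv] at h
    rw [show pt (c2 uS) a b = dd vt (WF uS) (a, b) from pt_dd a b (hW' _),
        show px (c2 uS a) b = dd vx (WF uS) (a, b) from px_dd a b (hW' _),
        show pz (c2 uS a) b = dd vz (WF uS) (a, b) from pz_dd a b (hW' _),
        show pz (Pi a) b = dd vz (SF Pi) (a, b) from pz_dd a b (hP' _)] at h
    exact h
  have H2E : ∀ r : ℝ × ℝ × ℝ, dd vt (SF uT) r
      + (UF uS r * dd vx (SF uT) r + WF uS r * dd vz (SF uT) r) + f * UF uS r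
      = -(cp * SF θ r * Pi₀') := by
    rintro ⟨a, b⟩
    have h := hM2 a b
    simp only [adv] at h
    rw [show pt uT a b = dd vt (SF uT) (a, b) from pt_dd a b (hT' _),
        show px (uT a) b = dd vx (SF uT) (a, b) from px_dd a b (hT' _),
        show pz (uT a) b = dd vz (SF uT) (a, b) from pz_dd a b (hT' _)] at h
    exact h
  have H3E : ∀ r : ℝ × ℝ × ℝ, dd vt (SF θ) r
      + (UF uS r * dd vx (SF θ) r + WF uS r * dd vz (SF θ) r)
      = -(s * SF uT r) := by
    rintro ⟨a, b⟩
    have h := hM3 a b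
    simp only [adv] at h
    rw [show pt θ a b = dd vt (SF θ) (a, b) from pt_dd a b (hTH' _),
        show px (θ a) b = dd vx (SF θ) (a, b) from px_dd a b (hTH' _),
        show pz (θ a) b = dd vz (SF θ) (a, b) from pz_dd a b (hTH' _)] at h
    exact h
  have H4E : ∀ r : ℝ × ℝ × ℝ, dd vt (SF D) r
      + (dd vx (SF D) r * UF uS r + SF D r * dd vx (UF uS) r)
      + (dd vz (SF D) r * WF uS r + SF D r * dd vz (WF uS) r) = 0 := by
    rintro ⟨a, b⟩
    have h := hM4 a b
    rw [show pt D a b = dd vt (SF D) (a, b) from pt_dd a b (hDF' _),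
        show px (fun y => D a y * (uS a y).1) b
          = dd vx (fun r => SF D r * UF uS r) (a, b)
          from px_dd (G := fun r => SF D r * UF uS r) a b (by fun_prop),
        show pz (fun y => D a y * (uS a y).2) b
          = dd vz (fun r => SF D r * WF uS r) (a, b)
          from pz_dd (G := fun r => SF D r * WF uS r) a b (by fun_prop),
        dd_mul' (hDF' _) (hU' _), dd_mul' (hDF' _) (hW' _)] at h
    exact h
  -- the potential vorticity in uncurried form
  have hqE : ∀ a b, q a b = (SF D (a, b))⁻¹ *
      (s * (dd vz (UF uS) (a, b) - dd vx (WF uS) (a, b))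
        + dd vz (SF θ) (a, b) * (dd vx (SF uT) (a, b) + f)
        - dd vx (SF θ) (a, b) * dd vz (SF uT) (a, b)) := by
    intro a b
    rw [hq a b,
        show pz (c1 uS a) b = dd vz (UF uS) (a, b) from pz_dd a b (hU' _),
        show px (c2 uS a) b = dd vx (WF uS) (a, b) from px_dd a b (hW' _),
        show pz (θ a) b = dd vz (SF θ) (a, b) from pz_dd a b (hTH' _),
        show px (uT a) b = dd vx (SF uT) (a, b) from px_dd a b (hT' _),
        show px (θ a) b = dd vx (SF θ) (a, b) from px_dd a b (hTH' _),
        show pz (uT a) b = dd vz (SF uT) (a, b) from pz_dd a b (hT' _)]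
    rfl
  have hQd : Differentiable ℝ (fun r => (SF D r)⁻¹ *
      (s * (dd vz (UF uS) r - dd vx (WF uS) r)
        + dd vz (SF θ) r * (dd vx (SF uT) r + f)
        - dd vx (SF θ) r * dd vz (SF uT) r)) := by
    intro r
    fun_prop (disch := exact hDne _)
  -- the three derivatives of q
  have g1 : pt q t p = dd vt (fun r => (SF D r)⁻¹ *
      (s * (dd vz (UF uS) r - dd vx (WF uS) r)
        + dd vz (SF θ) r * (dd vx (SF uT) r + f)
        - dd vx (SF θ) r * dd vz (SF uT) r)) (t, p) := by
    have e : (fun s' => q s' p) = fun s' => (SF D (s', p))⁻¹ *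
        (s * (dd vz (UF uS) (s', p) - dd vx (WF uS) (s', p))
          + dd vz (SF θ) (s', p) * (dd vx (SF uT) (s', p) + f)
          - dd vx (SF θ) (s', p) * dd vz (SF uT) (s', p)) := funext fun s' => hqE s' p
    show deriv (fun s' => q s' p) t = _
    rw [e]
    exact pt_dd t p (hQd _)
  have g2 : px (q t) p = dd vx (fun r => (SF D r)⁻¹ *
      (s * (dd vz (UF uS) r - dd vx (WF uS) r)
        + dd vz (SF θ) r * (dd vx (SF uT) r + f)
        - dd vx (SF θ) r * dd vz (SF uT) r)) (t, p) := by
    have e : q t = fun y => (SF D (t, y))⁻¹ *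
        (s * (dd vz (UF uS) (t, y) - dd vx (WF uS) (t, y))
          + dd vz (SF θ) (t, y) * (dd vx (SF uT) (t, y) + f)
          - dd vx (SF θ) (t, y) * dd vz (SF uT) (t, y)) := funext fun y => hqE t y
    rw [e]
    exact px_dd t p (hQd _)
  have g3 : pz (q t) p = dd vz (fun r => (SF D r)⁻¹ *
      (s * (dd vz (UF uS) r - dd vx (WF uS) r)
        + dd vz (SF θ) r * (dd vx (SF uT) r + f)
        - dd vx (SF θ) r * dd vz (SF uT) r)) (t, p) := by
    have e : q t = fun y => (SF D (t, y))⁻¹ *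
        (s * (dd vz (UF uS) (t, y) - dd vx (WF uS) (t, y))
          + dd vz (SF θ) (t, y) * (dd vx (SF uT) (t, y) + f)
          - dd vx (SF θ) (t, y) * dd vz (SF uT) (t, y)) := funext fun y => hqE t y
    rw [e]
    exact pz_dd t p (hQd _)
  -- differentiate the model equations
  have E1 := congrFun (congrArg (dd vz) (funext H1xE)) (t, p)
  have E2 := congrFun (congrArg (dd vx) (funext H1zE)) (t, p)
  have E3 := congrFun (congrArg (dd vx) (funext H2E)) (t, p)
  have E4 := congrFun (congrArg (dd vz) (funext H2E)) (t, p)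
  have E5 := congrFun (congrArg (dd vx) (funext H3E)) (t, p)
  have E6 := congrFun (congrArg (dd vz) (funext H3E)) (t, p)
  simp only [adv]
  rw [g1, g2, g3,
      show (uS t p).1 = UF uS (t, p) from rfl,
      show (uS t p).2 = WF uS (t, p) from rfl,
      show px (θ t) p = dd vx (SF θ) (t, p) from px_dd t p (hTH' _),
      show pz (θ t) p = dd vz (SF θ) (t, p) from pz_dd t p (hTH' _),
      show px (Pi t) p = dd vx (SF Pi) (t, p) from px_dd t p (hP' _),
      show pz (Pi t) p = dd vz (SF Pi) (t, p) from pz_dd t p (hP' _),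
      show D t p = SF D (t, p) from rfl]
  simp (disch := first | exact hDne _ | fun_prop (disch := exact hDne _)) only
      [dd_add', dd_sub', dd_mul', dd_neg', dd_const', dd_inv'] at E1 E2 E3 E4 E5 E6 ⊢
  rw [dd_comm' hU vz vt (t, p), dd_comm' hU vz vx (t, p), dd_comm' hP vz vx (t, p)] at E1
  rw [dd_comm' hW vx vt (t, p)] at E2
  rw [dd_comm' hT vx vt (t, p)] at E3
  rw [dd_comm' hT vz vt (t, p), dd_comm' hT vz vx (t, p)] at E4
  rw [dd_comm' hTH vx vt (t, p)] at E5
  rw [dd_comm' hTH vz vt (t, p), dd_comm' hTH vz vx (t, p)] at E6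
  rw [dd_comm' hW vz vx (t, p), dd_comm' hTH vz vx (t, p), dd_comm' hT vz vx (t, p)]
  have hinv : (SF D (t, p))⁻¹ * SF D (t, p) = 1 := inv_mul_cancel₀ (hDne (t, p))
  linear_combination
    (SF D (t, p))⁻¹ * (s * E1 - s * E2 + (dd vx (SF uT) (t, p) + f) * E6
      + dd vz (SF θ) (t, p) * E3 - dd vz (SF uT) (t, p) * E5 - dd vx (SF θ) (t, p) * E4)
    - ((SF D (t, p)) ^ 2)⁻¹ * (s * (dd vz (UF uS) (t, p) - dd vx (WF uS) (t, p))
        + dd vz (SF θ) (t, p) * (dd vx (SF uT) (t, p) + f)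
        - dd vx (SF θ) (t, p) * dd vz (SF uT) (t, p)) * H4E (t, p)
    + (SF D (t, p))⁻¹ * (s * (dd vz (UF uS) (t, p) - dd vx (WF uS) (t, p))
        + dd vz (SF θ) (t, p) * (dd vx (SF uT) (t, p) + f)
        - dd vx (SF θ) (t, p) * dd vz (SF uT) (t, p))
      * (dd vx (UF uS) (t, p) + dd vz (WF uS) (t, p)) * hinv
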